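/- Let G=(V,E) be a finite simple graph containing a clique K ⊆ V such that N({v}) ∖ K = N({w}) ∖ K for all v, w ∈ K (all vertices of K have the same neighbours outside K). If G has a T-winning m-strategy, then G has a T-winning m-strategy (F′_1,…,F′_T) such that for every i ∈ {1,…,T} and every v ∈ K, v ∈ F′_i if and only if K ⊆ F′_i. -/
import Mathlib


open scoped Classical
noncomputable section

variable {V : Type*}

/-- The neighbourhood of a set of vertices: all vertices outside `S` adjacent to some
vertex of `S`. -/
def nbhd [Fintype V] (G : SimpleGraph V) (S : Finset V) : Finset V :=
  Finset.univ.filter fun v => v ∉ S ∧ ∃ u ∈ S, G.Adj u v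

/-- The burning sets of a strategy `F` (where `F i` is the firefighter set at time `i`):
`B 0 = V` and `B (t+1) = (B t \ F (t+1)) ∪ N(B t \ F (t+1))`. -/
def burn [Fintype V] (G : SimpleGraph V) (F : ℕ → Finset V) : ℕ → Finset V
  | 0 => Finset.univ
  | t + 1 => (burn G F t \ F (t + 1)) ∪ nbhd G (burn G F t \ F (t + 1))

/-- `F` is a `T`-winning `m`-strategy for `G`. -/
def WinningStrategy [Fintype V] (G : SimpleGraph V) (m T : ℕ) (F : ℕ → Finset V) : Prop :=
  (∀ i, (F i).card ≤ m) ∧ burn G F T = ∅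

/-- The firefighter number of `G`: the least `m` admitting a winning `m`-strategy. -/
def ffn [Fintype V] (G : SimpleGraph V) : ℕ :=
  sInf {m | ∃ T F, WinningStrategy G m T F}

lemma mem_nbhd [Fintype V] (G : SimpleGraph V) (S : Finset V) (v : V) :
    v ∈ nbhd G S ↔ v ∉ S ∧ ∃ u ∈ S, G.Adj u v := by
  simp [nbhd]

lemma spread [Fintype V] (G : SimpleGraph V) {S : Finset V} {u w : V}
    (hu : u ∈ S) (h : G.Adj u w) : w ∈ S ∪ nbhd G S := by
  by_cases hw : w ∈ S
  · exact Finset.mem_union_left _ hw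
  · exact Finset.mem_union_right _ ((mem_nbhd G S w).2 ⟨hw, u, hu, h⟩)

lemma union_nbhd_mono [Fintype V] (G : SimpleGraph V) {S S' : Finset V} (h : S ⊆ S') :
    S ∪ nbhd G S ⊆ S' ∪ nbhd G S' := by
  intro x hx
  rcases Finset.mem_union.1 hx with hx | hx
  · exact Finset.mem_union_left _ (h hx)
  · rcases (mem_nbhd G S x).1 hx with ⟨_, u, hu, hadj⟩
    exact spread G (h hu) hadj

section klemmas
variable [Fintype V] (G : SimpleGraph V) (K : Finset V)
  (hclique : ∀ v ∈ K, ∀ w ∈ K, v ≠ w → G.Adj v w)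
  (hnbhd : ∀ v ∈ K, ∀ w ∈ K, nbhd G {v} \ K = nbhd G {w} \ K)

include hclique hnbhd in
/-- If `y ∈ K` and `x` would be ignited by `y`, then `x` is ignited by any
burning twin `u ∈ K` of `y`. -/
lemma twin_spread {S : Finset V} {y u x : V} (hy : y ∈ K) (hu : u ∈ K) (huS : u ∈ S)
    (hxy : y = x ∨ G.Adj y x) : x ∈ S ∪ nbhd G S := by
  by_cases hxK : x ∈ K
  · rcases eq_or_ne u x with rfl | hne
    · exact Finset.mem_union_left _ huS
    · exact spread G huS (hclique u hu x hxK hne)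
  · rcases hxy with rfl | hadj
    · exact absurd hy hxK
    · have hx' : x ∈ nbhd G {y} \ K := by
        refine Finset.mem_sdiff.2 ⟨(mem_nbhd G {y} x).2 ⟨?_, y, Finset.mem_singleton_self y, hadj⟩, hxK⟩
        simp only [Finset.mem_singleton]
        exact hadj.ne'
      rw [hnbhd y hy u hu] at hx'
      rcases (mem_nbhd G {u} x).1 (Finset.mem_sdiff.1 hx').1 with ⟨_, z, hz, hadj'⟩
      rw [Finset.mem_singleton] at hz
      subst hz
      exact spread G huS hadj'

include hclique hnbhd in
/-- If an unprotected burning vertex can ignite one vertex of `K`, it ignites all of `K`. -/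
lemma ignite_all {S : Finset V} {v u : V} (hv : v ∈ K) (hu : u ∈ S)
    (huv : u = v ∨ G.Adj u v) : K ⊆ S ∪ nbhd G S := by
  by_cases hK : u ∈ K
  · intro w hw
    rcases eq_or_ne u w with rfl | hne
    · exact Finset.mem_union_left _ hu
    · exact spread G hu (hclique u hK w hw hne)
  · rcases huv with rfl | hadj
    · exact absurd hv hK
    intro w hw
    have hu' : u ∈ nbhd G {v} \ K := by
      refine Finset.mem_sdiff.2 ⟨(mem_nbhd G {v} u).2 ⟨?_, v, Finset.mem_singleton_self v, hadj.symm⟩, hK⟩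
      simp only [Finset.mem_singleton]
      exact hadj.ne
    rw [hnbhd v hv w hw] at hu'
    rcases (mem_nbhd G {w} u).1 (Finset.mem_sdiff.1 hu').1 with ⟨_, x, hx, hadj'⟩
    rw [Finset.mem_singleton] at hx
    subst hx
    exact spread G hu hadj'.symm

include hclique hnbhd in
/-- At every time, either no vertex of `K` burns or all of `K` burns. -/
lemma burn_dichotomy (F : ℕ → Finset V) (t : ℕ) :
    K ∩ burn G F t = ∅ ∨ K ⊆ burn G F t := by
  cases t with
  | zero => right; intro x _; exact Finset.mem_univ x
  | succ t =>
    rcases (K ∩ burn G F (t + 1)).eq_empty_or_nonempty with he | ⟨v, hv⟩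
    · exact Or.inl he
    right
    rw [Finset.mem_inter] at hv
    obtain ⟨hvK, hvB⟩ := hv
    rw [burn] at hvB ⊢
    rcases Finset.mem_union.1 hvB with hv' | hv'
    · exact ignite_all G K hclique hnbhd hvK hv' (Or.inl rfl)
    · rcases (mem_nbhd G _ v).1 hv' with ⟨_, u, hu, hadj⟩
      exact ignite_all G K hclique hnbhd hvK hu (Or.inr hadj)

include hclique hnbhd in
/-- Removing the (partial) protection of `K` does not change one burning step,
provided `K` is not fully protected. -/
lemma step_eq {B Fi : Finset V} (hB : K ∩ B = ∅ ∨ K ⊆ B) (hKF : ¬ K ⊆ Fi) :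
    (B \ (Fi \ K)) ∪ nbhd G (B \ (Fi \ K)) = (B \ Fi) ∪ nbhd G (B \ Fi) := by
  rcases hB with hB | hB
  · have : B \ (Fi \ K) = B \ Fi := by
      ext x
      simp only [Finset.mem_sdiff, Finset.mem_sdiff, not_and, not_not]
      constructor
      · rintro ⟨hxB, hx⟩
        refine ⟨hxB, fun hxF => ?_⟩
        have hxK := hx hxF
        exact absurd (Finset.mem_inter.2 ⟨hxK, hxB⟩) (by simp [hB])
      · rintro ⟨hxB, hx⟩
        exact ⟨hxB, fun hxF => absurd hxF hx⟩
    rw [this]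
  · obtain ⟨u, huK, huF⟩ := Finset.not_subset.1 hKF
    have huBF : u ∈ B \ Fi := Finset.mem_sdiff.2 ⟨hB huK, huF⟩
    have hsub : B \ Fi ⊆ B \ (Fi \ K) := by
      intro x hx
      rw [Finset.mem_sdiff] at hx ⊢
      exact ⟨hx.1, fun h => hx.2 (Finset.mem_sdiff.1 h).1⟩
    apply Finset.Subset.antisymm _ (union_nbhd_mono G hsub)
    intro x hx
    rcases Finset.mem_union.1 hx with hx' | hx'
    · by_cases hxBF : x ∈ B \ Fi
      · exact Finset.mem_union_left _ hxBF
      · -- x ∈ B, x ∈ Fi, x ∈ K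
        rw [Finset.mem_sdiff] at hx' hxBF
        have hxF : x ∈ Fi := by
          by_contra hxF
          exact hxBF ⟨hx'.1, hxF⟩
        have hxK : x ∈ K := by
          by_contra hxK
          exact hx'.2 (Finset.mem_sdiff.2 ⟨hxF, hxK⟩)
        exact twin_spread G K hclique hnbhd hxK huK huBF (Or.inl rfl)
    · rcases (mem_nbhd G _ x).1 hx' with ⟨hxn, y, hy, hadj⟩
      by_cases hyBF : y ∈ B \ Fi
      · by_cases hxBF : x ∈ B \ Fi
        · exact Finset.mem_union_left _ hxBF
        · exact Finset.mem_union_right _ ((mem_nbhd G _ x).2 ⟨hxBF, y, hyBF, hadj⟩)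
      · rw [Finset.mem_sdiff] at hy hyBF
        have hyF : y ∈ Fi := by
          by_contra hyF
          exact (hyBF ⟨hy.1, hyF⟩).elim
        have hyK : y ∈ K := by
          by_contra hyK
          exact hy.2 (Finset.mem_sdiff.2 ⟨hyF, hyK⟩)
        exact twin_spread G K hclique hnbhd hyK huK huBF (Or.inr hadj)

end klemmas

/-- Clique lemma: if `K` is a clique all of whose vertices have the same neighbours
outside `K`, then any `T`-winning `m`-strategy can be replaced by one in which each
firefighter set contains all of `K` or none of it. -/
theorem winning_strategy_cliques [Fintype V] (G : SimpleGraph V) (K : Finset V) (m T : ℕ)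
    (hclique : ∀ v ∈ K, ∀ w ∈ K, v ≠ w → G.Adj v w)
    (hnbhd : ∀ v ∈ K, ∀ w ∈ K, nbhd G {v} \ K = nbhd G {w} \ K)
    (h : ∃ F, WinningStrategy G m T F) :
    ∃ F', WinningStrategy G m T F' ∧
      ∀ i, 1 ≤ i → i ≤ T → ∀ v ∈ K, (v ∈ F' i ↔ K ⊆ F' i) := by
  obtain ⟨F, hcard, hwin⟩ := h
  set F' : ℕ → Finset V := fun i => if K ⊆ F i then F i else F i \ K with hF'
  have hburn : ∀ t, burn G F' t = burn G F t := by
    intro t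
    induction t with
    | zero => rfl
    | succ t ih =>
      rw [burn, burn, ih]
      by_cases hKF : K ⊆ F (t + 1)
      · simp only [hF', if_pos hKF]
      · simp only [hF', if_neg hKF]
        exact step_eq G K hclique hnbhd (burn_dichotomy G K hclique hnbhd F t) hKF
  refine ⟨F', ⟨fun i => ?_, by rw [hburn]; exact hwin⟩, fun i _ _ v hv => ?_⟩
  · by_cases hKF : K ⊆ F i
    · simp only [hF', if_pos hKF]; exact hcard i
    · simp only [hF', if_neg hKF]
      exact le_trans (Finset.card_le_card (Finset.sdiff_subset)) (hcard i)
  · by_cases hKF : K ⊆ F i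
    · simp only [hF', if_pos hKF]
      exact ⟨fun _ => hKF, fun _ => hKF hv⟩
    · simp only [hF', if_neg hKF]
      constructor
      · intro hvF
        exact absurd hv (Finset.mem_sdiff.1 hvF).2
      · intro hsub
        exact absurd hv ((Finset.mem_sdiff.1 (hsub hv)).2)
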